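/- arXiv:2409.10363 — 4 statements merged into one kernel-verified Lean document; each statement's English description precedes it below -/
import Mathlib

section
/- Let $U_{max} > 0$, $\lambda > 0$, and suppose $A(s) = \lambda \sin(\sqrt{1 + U_{max}^2}\, s - \phi)$ with $A(0) = 0$, $A'(0) = -\lambda\sqrt{1+U_{max}^2}$, and $s_1 > 0$ is the smallest positive value with $A(s_1) = 0$ and $A'(s_1) = \lambda\sqrt{1+U_{max}^2}$. Then $\sqrt{1+U_{max}^2}\, s_1 = \pi$; equivalently, with turning radius $r = 1/\sqrt{1+U_{max}^2}$, the arc length $s_1$ corresponds to a turn angle of exactly $\pi$. -/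
/-!
The condition `A'(0) = -λω` (with `ω = √(1 + Umax²)`) forces `cos φ = -1`, so `φ ≡ π (mod 2π)`
and `A s = -λ sin (ω s)`. The end conditions `A s = 0`, `A' s = λω` then say exactly
`cos (ω s) = -1`, whose first positive solution is `ω s = π`.
-/

open Real

namespace Real

lemma cos_sub_of_cos_eq_neg_one {φ : ℝ} (h : cos φ = -1) (x : ℝ) : cos (x - φ) = -cos x := by
  rw [cos_sub, h, sin_eq_zero_iff_cos_eq.2 (Or.inr h)]
  ring

lemma sin_sub_of_cos_eq_neg_one {φ : ℝ} (h : cos φ = -1) (x : ℝ) : sin (x - φ) = -sin x := by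
  rw [sin_sub, h, sin_eq_zero_iff_cos_eq.2 (Or.inr h)]
  ring

lemma pi_le_of_cos_eq_neg_one {θ : ℝ} (hθ : 0 < θ) (h : cos θ = -1) : π ≤ θ := by
  by_contra! hlt
  have := cos_lt_cos_of_nonneg_of_le_pi hθ.le le_rfl hlt
  rw [cos_pi, h] at this
  exact lt_irrefl _ this

lemma hasDerivAt_sin_mul_sub (ω φ s : ℝ) :
    HasDerivAt (fun s => sin (ω * s - φ)) (ω * cos (ω * s - φ)) s := by
  have h := ((hasDerivAt_id s).const_mul ω).sub_const φ
  simp only [id, mul_one] at h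
  simpa only [mul_comm] using h.sin

end Real

theorem stmt_2_general (Umax lam φ : ℝ) (hlam : 0 < lam)
    (A : ℝ → ℝ)
    (hA : ∀ s, A s = lam * Real.sin (Real.sqrt (1 + Umax ^ 2) * s - φ))
    (h0' : deriv A 0 = -lam * Real.sqrt (1 + Umax ^ 2))
    (s₁ : ℝ) (hs₁ : 0 < s₁)
    (hend : A s₁ = 0 ∧ deriv A s₁ = lam * Real.sqrt (1 + Umax ^ 2))
    (hmin : ∀ s, 0 < s → s < s₁ →
      ¬(A s = 0 ∧ deriv A s = lam * Real.sqrt (1 + Umax ^ 2))) :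
    Real.sqrt (1 + Umax ^ 2) * s₁ = Real.pi ∧
    s₁ = Real.pi * (1 / Real.sqrt (1 + Umax ^ 2)) := by
  set ω := √(1 + Umax ^ 2)
  have hω : 0 < ω := by positivity
  have hlω : lam * ω ≠ 0 := by positivity
  have hderiv (s : ℝ) : deriv A s = lam * ω * cos (ω * s - φ) := by
    rw [funext hA, ((hasDerivAt_sin_mul_sub ω φ s).const_mul lam).deriv, mul_assoc]
  have hφ : cos φ = -1 := by
    rw [hderiv, mul_zero, zero_sub, cos_neg, neg_mul] at h0'
    exact mul_left_cancel₀ hlω (h0'.trans (by ring))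
  have hturn (s : ℝ) : A s = 0 ∧ deriv A s = lam * ω ↔ cos (ω * s) = -1 := by
    rw [hA, hderiv, sin_sub_of_cos_eq_neg_one hφ, cos_sub_of_cos_eq_neg_one hφ]
    constructor
    · rintro ⟨-, h⟩
      exact mul_left_cancel₀ hlω (by linarith)
    · intro h
      simp [sin_eq_zero_iff_cos_eq.2 (Or.inr h), h]
  have hπ : ω * s₁ = π := by
    refine le_antisymm (not_lt.1 fun hlt => ?_)
      (pi_le_of_cos_eq_neg_one (by positivity) ((hturn s₁).1 hend))
    refine hmin (π / ω) (by positivity) ((div_lt_iff₀' hω).2 hlt) ((hturn _).2 ?_)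
    rw [mul_div_cancel₀ _ hω.ne', cos_pi]
  refine ⟨hπ, ?_⟩
  rw [← hπ]
  field_simp

theorem stmt_2 (Umax lam φ : ℝ) (hU : 0 < Umax) (hlam : 0 < lam)
    (A : ℝ → ℝ)
    (hA : ∀ s, A s = lam * Real.sin (Real.sqrt (1 + Umax ^ 2) * s - φ))
    (h0 : A 0 = 0)
    (h0' : deriv A 0 = -lam * Real.sqrt (1 + Umax ^ 2))
    (s₁ : ℝ) (hs₁ : 0 < s₁)
    (hend : A s₁ = 0 ∧ deriv A s₁ = lam * Real.sqrt (1 + Umax ^ 2))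
    (hmin : ∀ s, 0 < s → s < s₁ →
      ¬(A s = 0 ∧ deriv A s = lam * Real.sqrt (1 + Umax ^ 2))) :
    Real.sqrt (1 + Umax ^ 2) * s₁ = Real.pi ∧
    s₁ = Real.pi * (1 / Real.sqrt (1 + Umax ^ 2)) :=
  stmt_2_general Umax lam φ hlam A hA h0' s₁ hs₁ hend hmin
end

section
/- Let $A, B, C$ satisfy the adjoint equations $A' = B$, $B' = -A + u_g C$, $C' = -u_g B$ with constant control $u_g$, and suppose the Hamiltonian identity $e + C(s) + u_g A(s) = 0$ holds for all $s$ with $e \ge 0$. If $A \equiv 0$ and $e > 0$, then $u_g C(s) = -u_g e$ and $B \equiv 0$, hence $B'(s) = -u_g e = 0$ for all $s$, forcing $u_g = 0$. -/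
theorem stmt_4 (u_g e : ℝ) (A B C : ℝ → ℝ)
    (hA : Differentiable ℝ A) (hB : Differentiable ℝ B) (hC : Differentiable ℝ C)
    (hA' : ∀ s, deriv A s = B s)
    (hB' : ∀ s, deriv B s = -A s + u_g * C s)
    (hC' : ∀ s, deriv C s = -u_g * B s)
    (hHam : ∀ s, e + C s + u_g * A s = 0)
    (he : 0 < e)
    (hAzero : ∀ s, A s = 0) :
    (∀ s, u_g * C s = -u_g * e) ∧ (∀ s, B s = 0) ∧
    (∀ s, deriv B s = -u_g * e) ∧ (∀ s, deriv B s = 0) ∧ u_g = 0 := by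
  have hAfun : A = fun _ => (0 : ℝ) := funext hAzero
  have hBzero : ∀ s, B s = 0 := by
    intro s
    rw [← hA' s, hAfun, deriv_const]
  have hCe : ∀ s, C s = -e := by
    intro s
    have := hHam s
    rw [hAzero s] at this
    linarith
  have hderivB : ∀ s, deriv B s = -u_g * e := by
    intro s
    rw [hB' s, hAzero s, hCe s]; ring
  have hBfun : B = fun _ => (0 : ℝ) := funext hBzero
  have hderivB0 : ∀ s, deriv B s = 0 := by
    intro s; rw [hBfun, deriv_const]
  have hug : u_g = 0 := by
    have h := (hderivB 0).symm.trans (hderivB0 0)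
    have : u_g * e = 0 := by linarith
    rcases mul_eq_zero.mp this with h | h
    · exact h
    · linarith
  refine ⟨fun s => by rw [hCe s]; ring, hBzero, hderivB, hderivB0, hug⟩
end

section
/- Let $r \in (0, 1/\sqrt{2}]$, $\phi_2 = \arccos(1 - 4r^2)$, and let $\gamma$ be defined by $\sin\gamma = \frac{1-4r^2}{3-4r^2}$, $\cos\gamma = \frac{2\sqrt{2}\sqrt{1-2r^2}}{3-4r^2}$, and set $\phi_1 = \pi/2 + \gamma$. Then $r(1 - \cos\phi_1)\cos\phi_2 + \sin\phi_1 \sin\phi_2 = 4(1 - 2r^2) r$ and $r \sin\phi_1 \cos\phi_2 + \cos\phi_1 \sin\phi_2 = 0$. -/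
open Real

/-
With `s = √(1 - 2r²)` and `D = 3 - 4r²`, the angles are explicit:
`cos φ₂ = 1 - 4r²`, `sin φ₂ = 2√2 r s`, `cos φ₁ = -(1 - 4r²)/D`, `sin φ₁ = 2√2 s/D`.
Substituting, both identities become rational identities in `r` and `s` modulo `s² = 1 - 2r²`.
-/

lemma sq_le_half_of_le_inv_sqrt_two {r : ℝ} (hr : 0 ≤ r) (h : r ≤ 1 / √2) : r ^ 2 ≤ 1 / 2 := by
  rwa [one_div, ← sqrt_inv, le_sqrt hr (by norm_num), ← one_div] at h

lemma cos_arccos_one_sub_four_mul_sq {r : ℝ} (hr : r ^ 2 ≤ 1 / 2) :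
    cos (arccos (1 - 4 * r ^ 2)) = 1 - 4 * r ^ 2 :=
  cos_arccos (by linarith) (by nlinarith)

lemma sin_arccos_one_sub_four_mul_sq {r : ℝ} (hr : 0 ≤ r) :
    sin (arccos (1 - 4 * r ^ 2)) = 2 * √2 * r * √(1 - 2 * r ^ 2) := by
  have h : 1 - (1 - 4 * r ^ 2) ^ 2 = (2 * √2 * r) ^ 2 * (1 - 2 * r ^ 2) := by
    rw [mul_pow, mul_pow, sq_sqrt zero_le_two]
    ring
  rw [sin_arccos, h, sqrt_mul (sq_nonneg _), sqrt_sq (by positivity)]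

theorem stmt_10 (r γ φ₁ φ₂ : ℝ)
    (hr : r ∈ Set.Ioc (0 : ℝ) (1 / Real.sqrt 2))
    (hφ₂ : φ₂ = Real.arccos (1 - 4 * r ^ 2))
    (hsinγ : Real.sin γ = (1 - 4 * r ^ 2) / (3 - 4 * r ^ 2))
    (hcosγ : Real.cos γ = 2 * Real.sqrt 2 * Real.sqrt (1 - 2 * r ^ 2) / (3 - 4 * r ^ 2))
    (hφ₁ : φ₁ = Real.pi / 2 + γ) :
    r * (1 - Real.cos φ₁) * Real.cos φ₂ + Real.sin φ₁ * Real.sin φ₂ =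
      4 * (1 - 2 * r ^ 2) * r ∧
    r * Real.sin φ₁ * Real.cos φ₂ + Real.cos φ₁ * Real.sin φ₂ = 0 := by
  obtain ⟨hr₀, hr₁⟩ := hr
  have hr_sq := sq_le_half_of_le_inv_sqrt_two hr₀.le hr₁
  have hD : 3 - 4 * r ^ 2 ≠ 0 := by nlinarith
  have hcos₁ : cos φ₁ = -sin γ := by rw [hφ₁, add_comm, cos_add_pi_div_two]
  have hsin₁ : sin φ₁ = cos γ := by rw [hφ₁, add_comm, sin_add_pi_div_two]
  rw [hcos₁, hsin₁, hsinγ, hcosγ, hφ₂, cos_arccos_one_sub_four_mul_sq hr_sq,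
    sin_arccos_one_sub_four_mul_sq hr₀.le]
  set D := 3 - 4 * r ^ 2 with hD_def
  set s := √(1 - 2 * r ^ 2)
  have hs : s ^ 2 = 1 - 2 * r ^ 2 := sq_sqrt (by linarith)
  constructor
  · field_simp
    linear_combination 4 * s ^ 2 * sq_sqrt zero_le_two + 8 * hs + (4 * r ^ 2 - 3) * hD_def
  · field_simp
    ring
end

section
/- Let $r \in (0, 1/\sqrt{2}]$ and define $\phi_1(r) = \frac{\pi}{2} + \arctan\left(\frac{1-4r^2}{2\sqrt{2}\sqrt{1-2r^2}}\right)$ (for $r < 1/\sqrt{2}$; $\phi_1(1/\sqrt{2}) = 0$) and $\phi_2(r) = \arccos(1 - 4r^2)$. Define $\Delta l(r) = 2\pi r - r\,\phi_1(r) - \phi_2(r)$. Then $\Delta l(r) > 0$ for all $r \in (0, 1/\sqrt{2}]$. -/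
open Real

noncomputable def φ₁ (r : ℝ) : ℝ :=
  if r = 1 / Real.sqrt 2 then 0
  else Real.pi / 2 + Real.arctan ((1 - 4 * r ^ 2) / (2 * Real.sqrt 2 * Real.sqrt (1 - 2 * r ^ 2)))

noncomputable def φ₂ (r : ℝ) : ℝ := Real.arccos (1 - 4 * r ^ 2)

noncomputable def Δl (r : ℝ) : ℝ := 2 * Real.pi * r - r * φ₁ r - φ₂ r

/-
Split at `r = 1/2`, where the argument of the arctan in `φ₁` changes sign.
For `r ≤ 1/2`: `φ₁ ≤ π/2 + √2/4` since `arctan u ≤ u`, and `φ₂ = 2 arcsin (√2 r) < (8/3) √2 r`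
from `sin t > t - t³/6`; hence `Δl r > r (3π/2 - 35√2/12) > 0`.
For `r ≥ 1/2`: `φ₁ ≤ π/2`, and with `s = √(1 - 2r²)` we have `φ₂ = π - 2 arcsin s ≤ π - 2s`
and `s ≥ s² = 1 - 2r²`, which leaves the concave quadratic `3πr/2 - π + 2 - 4r²`, positive
at both ends of `[1/2, 1/√2]`.
-/

namespace Real

lemma arctan_le_self {x : ℝ} (hx : 0 ≤ x) : arctan x ≤ x := by
  simpa only [tan_arctan] using le_tan (arctan_nonneg.2 hx) (arctan_lt_pi_div_two x)

lemma self_le_arcsin {x : ℝ} (hx₀ : 0 ≤ x) (hx₁ : x ≤ 1) : x ≤ arcsin x := by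
  simpa only [sin_arcsin (by linarith) hx₁] using sin_le (arcsin_nonneg.2 hx₀)

lemma arcsin_lt_four_thirds_mul {x : ℝ} (hx₀ : 0 < x) (hx₁ : x ≤ √2 / 2) :
    arcsin x < 4 / 3 * x := by
  set t := arcsin x
  have ht₀ : 0 < t := arcsin_pos.2 hx₀
  have ht₁ : t ≤ 1 := by
    have : t ≤ π / 4 := by
      rwa [arcsin_le_iff_le_sin' ⟨by linarith [pi_pos], by linarith [pi_pos]⟩, sin_pi_div_four]
    linarith [pi_lt_four]
  have hsin : sin t = x := sin_arcsin (by linarith) (by linarith [sqrt_two_lt_three_halves])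
  have hcube : t ^ 3 ≤ t := by
    simpa using pow_le_pow_of_le_one ht₀.le ht₁ (by norm_num : 1 ≤ 3)
  linarith [sin_gt_sub_cube ht₀]

lemma arccos_one_sub_two_mul_sq {x : ℝ} (hx₀ : 0 ≤ x) (hx₁ : x ≤ 1) :
    arccos (1 - 2 * x ^ 2) = 2 * arcsin x := by
  have hcos : cos (2 * arcsin x) = 1 - 2 * x ^ 2 := by
    rw [cos_two_mul, cos_sq', sin_arcsin (by linarith) hx₁]
    ring
  rw [← hcos, arccos_cos (by linarith [arcsin_nonneg.2 hx₀])
    (by linarith [arcsin_le_pi_div_two x])]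

lemma arccos_two_mul_sq_sub_one {x : ℝ} (hx₀ : 0 ≤ x) (hx₁ : x ≤ 1) :
    arccos (2 * x ^ 2 - 1) = π - 2 * arcsin x := by
  rw [← arccos_one_sub_two_mul_sq hx₀ hx₁, ← arccos_neg, neg_sub]

end Real

lemma φ₁_le_of_le_half {r : ℝ} (hr₀ : 0 ≤ r) (hr : r ≤ 1 / 2) : φ₁ r ≤ π / 2 + √2 / 4 := by
  have hne : r ≠ 1 / √2 := by
    refine (hr.trans_lt ?_).ne
    rw [one_div_lt_one_div two_pos (by positivity)]
    linarith [sqrt_two_lt_three_halves]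
  set s := √(1 - 2 * r ^ 2)
  have hs₀ : 0 < s := sqrt_pos.2 (by nlinarith)
  have hs₁ : s ≤ 1 := sqrt_le_one.2 (by nlinarith)
  have hsq : s ^ 2 = 1 - 2 * r ^ 2 := sq_sqrt (by nlinarith)
  have harg : (1 - 4 * r ^ 2) / (2 * √2 * s) ≤ √2 / 4 := by
    rw [div_le_iff₀ (by positivity)]
    -- `1 - 4r² ≤ s² ≤ s`
    nlinarith [sq_sqrt (zero_le_two (α := ℝ))]
  rw [φ₁, if_neg hne]
  linarith [arctan_le_self (x := √2 / 4) (by positivity), arctan_strictMono.monotone harg]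

lemma φ₁_le_pi_div_two_of_half_le {r : ℝ} (hr : 1 / 2 ≤ r) : φ₁ r ≤ π / 2 := by
  rw [φ₁]
  split_ifs
  · linarith [pi_pos]
  · have : arctan ((1 - 4 * r ^ 2) / (2 * √2 * √(1 - 2 * r ^ 2))) ≤ 0 :=
      arctan_le_zero.2 (div_nonpos_of_nonpos_of_nonneg (by nlinarith) (by positivity))
    linarith

lemma φ₂_eq_two_mul_arcsin {r : ℝ} (hr₀ : 0 ≤ r) (hr : 2 * r ^ 2 ≤ 1) :
    φ₂ r = 2 * arcsin (√2 * r) := by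
  have hsq : (√2 * r) ^ 2 = 2 * r ^ 2 := by
    rw [mul_pow, sq_sqrt zero_le_two]
  rw [φ₂, ← arccos_one_sub_two_mul_sq (by positivity)
    ((sq_le_one_iff₀ (by positivity)).1 (hsq ▸ hr)), hsq]
  ring_nf

lemma φ₂_eq_pi_sub_two_mul_arcsin {r : ℝ} (hr : 2 * r ^ 2 ≤ 1) :
    φ₂ r = π - 2 * arcsin √(1 - 2 * r ^ 2) := by
  rw [φ₂, ← arccos_two_mul_sq_sub_one (sqrt_nonneg _) (sqrt_le_one.2 (by nlinarith)),
    sq_sqrt (by linarith)]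
  ring_nf

lemma Δl_pos_of_le_half {r : ℝ} (hr₀ : 0 < r) (hr : r ≤ 1 / 2) : 0 < Δl r := by
  have hφ₁ := φ₁_le_of_le_half hr₀.le hr
  have hφ₂ : φ₂ r < 8 / 3 * (√2 * r) := by
    rw [φ₂_eq_two_mul_arcsin hr₀.le (by nlinarith)]
    linarith [arcsin_lt_four_thirds_mul (x := √2 * r) (by positivity)
      (by nlinarith [sqrt_nonneg 2])]
  have hcoef : 35 / 12 * √2 < 3 / 2 * π := by
    linarith [sqrt_two_lt_three_halves, pi_gt_three]
  rw [Δl]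
  nlinarith [mul_le_mul_of_nonneg_left hφ₁ hr₀.le, mul_lt_mul_of_pos_left hcoef hr₀]

lemma Δl_pos_of_half_le {r : ℝ} (hr₁ : 1 / 2 ≤ r) (hr : 2 * r ^ 2 ≤ 1) : 0 < Δl r := by
  set s := √(1 - 2 * r ^ 2)
  have hs₀ : 0 ≤ s := sqrt_nonneg _
  have hs₁ : s ≤ 1 := sqrt_le_one.2 (by nlinarith)
  have hsq : s ^ 2 = 1 - 2 * r ^ 2 := sq_sqrt (by linarith)
  have hφ₁ := φ₁_le_pi_div_two_of_half_le hr₁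
  have hφ₂ : φ₂ r ≤ π - 2 * s := by
    rw [φ₂_eq_pi_sub_two_mul_arcsin hr]
    linarith [self_le_arcsin hs₀ hs₁]
  have hs : 1 - 2 * r ^ 2 ≤ s := by nlinarith
  rw [Δl]
  -- 4r² lies below its chord over [1/2, 0.71] ⊇ [1/2, 1/√2]
  nlinarith [mul_le_mul_of_nonneg_left hφ₁ (by linarith : (0 : ℝ) ≤ r), pi_gt_d2, pi_lt_d2,
    mul_nonneg (by linarith : (0 : ℝ) ≤ r - 1 / 2) (by nlinarith : (0 : ℝ) ≤ 71 / 100 - r)]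

theorem stmt_11 (r : ℝ) (hr : r ∈ Set.Ioc (0 : ℝ) (1 / Real.sqrt 2)) :
    0 < Δl r := by
  obtain ⟨hr₀, hr₁⟩ := hr
  rcases le_total r (1 / 2) with hr₂ | hr₂
  · exact Δl_pos_of_le_half hr₀ hr₂
  · refine Δl_pos_of_half_le hr₂ ?_
    have h := pow_le_one₀ (n := 2) (by positivity) ((le_div_iff₀ (by positivity)).1 hr₁)
    rwa [mul_pow, sq_sqrt zero_le_two, mul_comm] at h
end
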